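/- Hilbert's Nullstellensatz: let k be an algebraically closed field, n a natural number, and J an ideal of k[X₁,…,Xₙ]. Then I(V(J)) = √J, the radical of J. -/

import Mathlib

theorem stmt_18 (k : Type*) [Field k] [IsAlgClosed k] (n : ℕ)
    (J : Ideal (MvPolynomial (Fin n) k)) :
    MvPolynomial.vanishingIdeal k (MvPolynomial.zeroLocus k J) = J.radical :=
  MvPolynomial.vanishingIdeal_zeroLocus_eq_radical J
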